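/- Under the pseudo-regression setup, assume additionally that |v(z)| ≤ A for μ-almost every z, that E[(V⁽¹⁾ − v(U⁽¹⁾))² | U⁽¹⁾] ≤ σ² almost surely, and that λmin‖x‖² ≤ xᵀGx ≤ λmax‖x‖² for all x ∈ ℝᴷ with 0 < λmin ≤ λmax. Set α_k := ∫ ψ_k v dμ and v^K := Σ_{k=1}^{K} (G⁻¹α)_k ψ_k. Then E[∫_{ℝⁿ} |ṽ(z) − v^K(z)|² μ(dz)] ≤ (1/λmin)·Σ_{k=1}^{K} Var[((1/M)·𝕄ᵀ𝕐)_k] ≤ (σ² + A²)·λmax·K/(λmin·M). -/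

import Mathlib

open MeasureTheory ProbabilityTheory Matrix
open scoped ENNReal

/-!
With `β := M⁻¹ 𝕄ᵀ𝕐`, the error `ṽ - v^K` is `∑ₖ (G⁻¹ (β - α))ₖ ψₖ`, whose squared `L²(μ)` norm is
`(β - α)ᵀ G⁻¹ (β - α) ≤ λmin⁻¹ ‖β - α‖²`. By the tower property `E β = α`, so taking expectations
gives the sum of variances. Each `βₖ` is the mean of `M` i.i.d. copies of `ψₖ(U) V`, hence
`Var βₖ ≤ E[ψₖ(U)² V²] / M`; conditioning on `U`, `E[V² | U] = Var[V | U] + v(U)² ≤ σ² + A²`, so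
`E[ψₖ(U)² V²] ≤ (σ² + A²) Gₖₖ ≤ (σ² + A²) λmax`.
-/

namespace Matrix

variable {ι : Type*} [Fintype ι]

/-- Cauchy–Schwarz: `c ‖x‖² ≤ xᵀ G x ≤ ‖x‖ ‖G x‖`, so `c ‖x‖ ≤ ‖G x‖`. -/
theorem mul_dotProduct_mulVec_le_of_coercive {G : Matrix ι ι ℝ} {c : ℝ} (hc : 0 < c)
    (hG : ∀ x : ι → ℝ, c * ∑ i, x i ^ 2 ≤ x ⬝ᵥ G *ᵥ x) (x : ι → ℝ) :
    c * (x ⬝ᵥ G *ᵥ x) ≤ ∑ i, (G *ᵥ x) i ^ 2 := by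
  have hcs : (x ⬝ᵥ G *ᵥ x) ^ 2 ≤ (∑ i, x i ^ 2) * ∑ i, (G *ᵥ x) i ^ 2 :=
    Finset.sum_mul_sq_le_sq_mul_sq _ _ _
  have hGx : 0 ≤ ∑ i, (G *ᵥ x) i ^ 2 := by positivity
  rcases (show 0 ≤ ∑ i, x i ^ 2 by positivity).eq_or_lt with hx | hx
  · rw [← hx, zero_mul] at hcs
    rw [pow_eq_zero_iff two_ne_zero |>.mp (le_antisymm hcs (sq_nonneg _)), mul_zero]
    exact hGx
  · nlinarith [hG x, mul_le_mul_of_nonneg_left (hG x) hc.le]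

theorem diag_le_of_dotProduct_mulVec_le [DecidableEq ι] {G : Matrix ι ι ℝ} {c : ℝ}
    (hG : ∀ x : ι → ℝ, x ⬝ᵥ G *ᵥ x ≤ c * ∑ i, x i ^ 2) (i : ι) : G i i ≤ c := by
  simpa [Pi.single_apply] using hG (Pi.single i 1)

end Matrix

section Gram

variable {ι E : Type*} [Fintype ι] [MeasurableSpace E] {μ : Measure E} {ψ : ι → E → ℝ}
  {G : Matrix ι ι ℝ}

theorem integral_sq_sum_mul_eq_dotProduct_mulVec (hψ : ∀ i, MemLp (ψ i) 2 μ)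
    (hG : ∀ i j, G i j = ∫ z, ψ i z * ψ j z ∂μ) (d : ι → ℝ) :
    ∫ z, (∑ i, d i * ψ i z) ^ 2 ∂μ = d ⬝ᵥ G *ᵥ d := by
  have hint (i j : ι) : Integrable (fun z => d i * d j * (ψ i z * ψ j z)) μ :=
    ((hψ i).integrable_mul (hψ j)).const_mul _
  have hexpand (z : E) : (∑ i, d i * ψ i z) ^ 2 = ∑ i, ∑ j, d i * d j * (ψ i z * ψ j z) := by
    rw [sq, Finset.sum_mul_sum]
    exact Finset.sum_congr rfl fun i _ => Finset.sum_congr rfl fun j _ => by ring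
  simp_rw [hexpand]
  rw [integral_finsetSum _ fun i _ => integrable_finsetSum _ fun j _ => hint i j]
  simp_rw [integral_finsetSum _ fun j _ => hint _ j, integral_const_mul, ← hG]
  simp only [dotProduct, mulVec, Finset.mul_sum]
  exact Finset.sum_congr rfl fun i _ => Finset.sum_congr rfl fun j _ => by ring

theorem integral_sq_sum_inv_mulVec_mul_le [DecidableEq ι] (hψ : ∀ i, MemLp (ψ i) 2 μ)
    (hG : ∀ i j, G i j = ∫ z, ψ i z * ψ j z ∂μ) (hdet : IsUnit G.det) {c : ℝ} (hc : 0 < c)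
    (hcoer : ∀ x : ι → ℝ, c * ∑ i, x i ^ 2 ≤ x ⬝ᵥ G *ᵥ x) (y : ι → ℝ) :
    ∫ z, (∑ i, (G⁻¹ *ᵥ y) i * ψ i z) ^ 2 ∂μ ≤ c⁻¹ * ∑ i, y i ^ 2 := by
  have hGy : G *ᵥ (G⁻¹ *ᵥ y) = y := by rw [mulVec_mulVec, mul_nonsing_inv G hdet, one_mulVec]
  have h := mul_dotProduct_mulVec_le_of_coercive hc hcoer (G⁻¹ *ᵥ y)
  rw [hGy] at h
  rwa [integral_sq_sum_mul_eq_dotProduct_mulVec hψ hG, hGy, le_inv_mul_iff₀ hc]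

theorem integral_integral_sq_sum_inv_mulVec_mul_le [DecidableEq ι] {Ω : Type*}
    [MeasurableSpace Ω] {P : Measure Ω} [IsFiniteMeasure P] (hψ : ∀ i, MemLp (ψ i) 2 μ)
    (hG : ∀ i j, G i j = ∫ z, ψ i z * ψ j z ∂μ) (hdet : IsUnit G.det) {c : ℝ} (hc : 0 < c)
    (hcoer : ∀ x : ι → ℝ, c * ∑ i, x i ^ 2 ≤ x ⬝ᵥ G *ᵥ x) {b : ι → Ω → ℝ}
    (hb : ∀ i, MemLp (b i) 2 P) {a : ι → ℝ} (ha : ∀ i, ∫ ω, b i ω ∂P = a i) :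
    ∫ ω, ∫ z, (∑ i, (G⁻¹ *ᵥ fun i => b i ω - a i) i * ψ i z) ^ 2 ∂μ ∂P
      ≤ c⁻¹ * ∑ i, Var[b i; P] := by
  have hint (i : ι) : Integrable (fun ω => (b i ω - a i) ^ 2) P :=
    ((hb i).sub (memLp_const (a i))).integrable_sq
  refine (integral_mono_of_nonneg (ae_of_all _ fun ω => integral_nonneg fun z => sq_nonneg _)
    ((integrable_finsetSum _ fun i _ => hint i).const_mul _)
    (ae_of_all _ fun ω => integral_sq_sum_inv_mulVec_mul_le hψ hG hdet hc hcoer _)).trans_eq ?_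
  rw [integral_const_mul, integral_finsetSum _ fun i _ => hint i]
  simp_rw [variance_eq_integral (hb _).aemeasurable, ha]

end Gram

section CondExp

variable {Ω : Type*} {m m₀ : MeasurableSpace Ω} {P : Measure[m₀] Ω}

/-- Both sides are `∫⁻ S` against a measure with density, and the two densities `X` and
`P⁻[X|m]` give the same measure on `m`. -/
theorem lintegral_mul_condLExp (hm : m ≤ m₀) [SigmaFinite (P.trim hm)] {S X : Ω → ℝ≥0∞}
    (hS : Measurable[m] S) (hX : Measurable X) :
    ∫⁻ ω, S ω * X ω ∂P = ∫⁻ ω, S ω * P⁻[X|m] ω ∂P := by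
  have htrim : (P.withDensity X).trim hm = (P.withDensity P⁻[X|m]).trim hm := by
    refine @Measure.ext _ m _ _ fun B hB => ?_
    rw [trim_measurableSet_eq hm hB, trim_measurableSet_eq hm hB, withDensity_apply _ (hm B hB),
      withDensity_apply _ (hm B hB), setLIntegral_condLExp hm P X hB]
  simp_rw [mul_comm (S _)]
  rw [← Pi.mul_def, ← Pi.mul_def,
    ← lintegral_withDensity_eq_lintegral_mul P hX (hS.mono hm le_rfl),
    ← lintegral_withDensity_eq_lintegral_mul P (measurable_condLExp' m P X) (hS.mono hm le_rfl),
    ← lintegral_trim hm hS, ← lintegral_trim hm hS, htrim]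

/-- Proved with Lebesgue integrals, so that the integrability of `s * g` is an output. -/
theorem integrable_mul_and_integral_mul_le_of_condExp_le [IsFiniteMeasure P] (hm : m ≤ m₀)
    {s g : Ω → ℝ} {c : ℝ} (hc : 0 ≤ c) (hs : Measurable[m] s) (hs₀ : 0 ≤ s)
    (hsi : Integrable s P) (hg : Measurable g) (hg₀ : 0 ≤ g) (hgi : Integrable g P)
    (hgc : ∀ᵐ ω ∂P, P[g|m] ω ≤ c) :
    Integrable (fun ω => s ω * g ω) P ∧ ∫ ω, s ω * g ω ∂P ≤ c * ∫ ω, s ω ∂P := by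
  have hsg₀ : 0 ≤ᵐ[P] fun ω => s ω * g ω := ae_of_all _ fun ω => mul_nonneg (hs₀ ω) (hg₀ ω)
  have hbound : ∫⁻ ω, ENNReal.ofReal (s ω * g ω) ∂P ≤ ENNReal.ofReal (c * ∫ ω, s ω ∂P) :=
    calc ∫⁻ ω, ENNReal.ofReal (s ω * g ω) ∂P
        = ∫⁻ ω, ENNReal.ofReal (s ω) * ENNReal.ofReal (g ω) ∂P := by
          simp_rw [ENNReal.ofReal_mul (hs₀ _)]
      _ = ∫⁻ ω, ENNReal.ofReal (s ω) * P⁻[fun ω => ENNReal.ofReal (g ω)|m] ω ∂P :=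
          lintegral_mul_condLExp hm hs.ennreal_ofReal hg.ennreal_ofReal
      _ ≤ ∫⁻ ω, ENNReal.ofReal (s ω) * ENNReal.ofReal c ∂P := by
          refine lintegral_mono_ae ?_
          filter_upwards [condLExp_ofReal m hgi (ae_of_all _ hg₀), hgc] with ω h h'
          rw [h]
          gcongr
      _ = ENNReal.ofReal (c * ∫ ω, s ω ∂P) := by
          rw [lintegral_mul_const _ (hs.mono hm le_rfl).ennreal_ofReal,
            ← ofReal_integral_eq_lintegral_ofReal hsi (ae_of_all _ hs₀), ← ENNReal.ofReal_mul' hc,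
            mul_comm]
  have hint : Integrable (fun ω => s ω * g ω) P :=
    ⟨((hs.mono hm le_rfl).mul hg).aestronglyMeasurable,
      (hasFiniteIntegral_iff_ofReal hsg₀).mpr (hbound.trans_lt ENNReal.ofReal_lt_top)⟩
  refine ⟨hint, ?_⟩
  rwa [← ENNReal.ofReal_le_ofReal_iff (mul_nonneg hc (integral_nonneg hs₀)),
    ofReal_integral_eq_lintegral_ofReal hint hsg₀]

/-- `E[Y² | m] = Var[Y | m] + E[Y | m]²`. -/
theorem condExp_sq_ae_le [IsFiniteMeasure P] (hm : m ≤ m₀) {Y w : Ω → ℝ} {A σ : ℝ}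
    (hY : MemLp Y 2 P) (hw : P[Y|m] =ᵐ[P] w) (hwA : ∀ᵐ ω ∂P, |w ω| ≤ A)
    (hσ : ∀ᵐ ω ∂P, P[fun ω => (Y ω - w ω) ^ 2|m] ω ≤ σ ^ 2) :
    ∀ᵐ ω ∂P, P[Y ^ 2|m] ω ≤ σ ^ 2 + A ^ 2 := by
  have hvar : Var[Y; P | m] =ᵐ[P] P[fun ω => (Y ω - w ω) ^ 2|m] :=
    condExp_congr_ae (by filter_upwards [hw] with ω h using by simp [h])
  filter_upwards [condVar_ae_eq_condExp_sq_sub_sq_condExp hm hY, hvar, hw, hwA, hσ]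
    with ω hdecomp hvarω hwω hAω hσω
  have hw_sq : w ω ^ 2 ≤ A ^ 2 := by
    rw [← sq_abs]
    exact pow_le_pow_left₀ (abs_nonneg _) hAω 2
  simp only [Pi.sub_apply, Pi.pow_apply, hwω] at hdecomp
  linarith

end CondExp

section SampleMean

variable {Ω : Type*} [MeasurableSpace Ω] {P : Measure Ω} {M : ℕ} {X : Fin M → Ω → ℝ} {i₀ : Fin M}

theorem integral_mean_eq_of_identDistrib (hX : Integrable (X i₀) P)
    (hid : ∀ i, IdentDistrib (X i) (X i₀) P P) :
    ∫ ω, (M : ℝ)⁻¹ * ∑ i, X i ω ∂P = ∫ ω, X i₀ ω ∂P := by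
  have hM : (M : ℝ) ≠ 0 := Nat.cast_ne_zero.mpr i₀.pos.ne'
  rw [integral_const_mul, integral_finsetSum _ fun i _ => (hid i).symm.integrable_snd hX]
  simp [fun i => (hid i).integral_eq, hM]

theorem variance_mean_eq_of_iIndepFun_identDistrib (hX : MemLp (X i₀) 2 P)
    (hind : iIndepFun X P) (hid : ∀ i, IdentDistrib (X i) (X i₀) P P) :
    Var[fun ω => (M : ℝ)⁻¹ * ∑ i, X i ω; P] = Var[X i₀; P] / M := by
  have hM : (M : ℝ) ≠ 0 := Nat.cast_ne_zero.mpr i₀.pos.ne'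
  have hsum : Var[fun ω => ∑ i, X i ω; P] = M * Var[X i₀; P] := by
    rw [← Finset.sum_fn, IndepFun.variance_sum (fun i _ => (hid i).symm.memLp_snd hX)
      fun i _ j _ hij => hind.indepFun hij]
    simp [fun i => (hid i).variance_eq]
  rw [variance_const_mul, hsum]
  field_simp

end SampleMean

section Regression

variable {Ω E : Type*} [MeasurableSpace Ω] [MeasurableSpace E] {P : Measure Ω}
  [IsFiniteMeasure P] {U : Ω → E} {V : Ω → ℝ} {v f : E → ℝ}

theorem integral_comp_mul_eq_of_condExp_eq (hU : Measurable U) (hv : Measurable v)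
    (hf : Measurable f) (hV : Integrable V P) (hfV : Integrable (fun ω => f (U ω) * V ω) P)
    (hcond : P[V|MeasurableSpace.comap U inferInstance] =ᵐ[P] fun ω => v (U ω)) :
    ∫ ω, f (U ω) * V ω ∂P = ∫ z, f z * v z ∂(P.map U) := by
  have hfU : StronglyMeasurable[MeasurableSpace.comap U inferInstance] fun ω => f (U ω) :=
    (hf.comp (Measurable.of_comap_le le_rfl)).stronglyMeasurable
  calc ∫ ω, f (U ω) * V ω ∂P
      = ∫ ω, (P[fun ω => f (U ω) * V ω|MeasurableSpace.comap U inferInstance]) ω ∂P :=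
        (integral_condExp hU.comap_le).symm
    _ = ∫ ω, f (U ω) * v (U ω) ∂P := by
        refine integral_congr_ae ?_
        filter_upwards [condExp_mul_of_stronglyMeasurable_left hfU hfV hV, hcond] with ω h h'
        exact h.trans (by rw [Pi.mul_apply, h'])
    _ = ∫ z, f z * v z ∂(P.map U) :=
        (integral_map hU.aemeasurable (hf.mul hv).aestronglyMeasurable).symm

theorem memLp_comp_mul_and_integral_sq_le (hU : Measurable U) (hV : Measurable V)
    (hf : Measurable f) (hf₂ : MemLp f 2 (P.map U)) (hV₂ : MemLp V 2 P)
    (hcond : P[V|MeasurableSpace.comap U inferInstance] =ᵐ[P] fun ω => v (U ω))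
    {A σ : ℝ} (hA : ∀ᵐ z ∂(P.map U), |v z| ≤ A)
    (hσ : ∀ᵐ ω ∂P,
      P[fun ω => (V ω - v (U ω)) ^ 2|MeasurableSpace.comap U inferInstance] ω ≤ σ ^ 2) :
    MemLp (fun ω => f (U ω) * V ω) 2 P ∧
      ∫ ω, (f (U ω) * V ω) ^ 2 ∂P ≤ (σ ^ 2 + A ^ 2) * ∫ z, f z ^ 2 ∂(P.map U) := by
  have hfU₂ : MemLp (fun ω => f (U ω)) 2 P :=
    (memLp_map_measure_iff hf₂.aestronglyMeasurable hU.aemeasurable).mp hf₂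
  obtain ⟨hint, hle⟩ := integrable_mul_and_integral_mul_le_of_condExp_le hU.comap_le
    (add_nonneg (sq_nonneg σ) (sq_nonneg A))
    ((hf.comp (Measurable.of_comap_le le_rfl)).pow_const 2) (fun ω => sq_nonneg _)
    hfU₂.integrable_sq (hV.pow_const 2) (fun ω => sq_nonneg (V ω)) hV₂.integrable_sq
    (condExp_sq_ae_le hU.comap_le hV₂ hcond (ae_of_ae_map hU.aemeasurable hA) hσ)
  refine ⟨(memLp_two_iff_integrable_sq (f := fun ω => f (U ω) * V ω)
    ((hf.comp hU).mul hV).aestronglyMeasurable).mpr ?_, ?_⟩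
  · simpa only [mul_pow, Function.comp_apply] using hint
  · simp_rw [mul_pow]
    rwa [integral_map hU.aemeasurable (hf.pow_const 2).aestronglyMeasurable]

end Regression

theorem pseudo_regression_variance_part_bound_general
    (n K M : ℕ) (hM : 0 < M)
    (μ : Measure (Fin n → ℝ)) [IsProbabilityMeasure μ]
    (ψ : Fin K → (Fin n → ℝ) → ℝ)
    (hψmeas : ∀ k, Measurable (ψ k))
    (hψL2 : ∀ k, MemLp (ψ k) 2 μ)
    (G : Matrix (Fin K) (Fin K) ℝ)
    (hGdef : ∀ k l, G k l = ∫ z, ψ k z * ψ l z ∂μ)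
    (hGinv : IsUnit G.det)
    (Ω : Type*) [MeasurableSpace Ω] (P : Measure Ω) [IsProbabilityMeasure P]
    (U : Fin M → Ω → (Fin n → ℝ)) (V : Fin M → Ω → ℝ)
    (hUmeas : ∀ m, Measurable (U m)) (hVmeas : ∀ m, Measurable (V m))
    (hindep : iIndepFun (fun m ω => (U m ω, V m ω)) P)
    (hident : ∀ m, IdentDistrib (fun ω => (U m ω, V m ω))
      (fun ω => (U ⟨0, hM⟩ ω, V ⟨0, hM⟩ ω)) P P)
    (hlaw : Measure.map (U ⟨0, hM⟩) P = μ)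
    (hVL2 : MemLp (V ⟨0, hM⟩) 2 P)
    (v : (Fin n → ℝ) → ℝ) (hvmeas : Measurable v)
    (hcond : P[(fun ω => V ⟨0, hM⟩ ω) |
        MeasurableSpace.comap (U ⟨0, hM⟩) inferInstance]
      =ᵐ[P] fun ω => v (U ⟨0, hM⟩ ω))
    (A σ lmin lmax : ℝ)
    -- |v| ≤ A μ-a.e.
    (hA : ∀ᵐ z ∂μ, |v z| ≤ A)
    -- conditional variance bound E[(V⁽¹⁾ - v(U⁽¹⁾))² | U⁽¹⁾] ≤ σ² a.s.
    (hσ : ∀ᵐ ω ∂P, (P[(fun ω' => (V ⟨0, hM⟩ ω' - v (U ⟨0, hM⟩ ω'))^2) |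
        MeasurableSpace.comap (U ⟨0, hM⟩) inferInstance]) ω ≤ σ^2)
    (hlmin : 0 < lmin)
    -- eigenvalue bounds for the Gram matrix: λmin‖x‖² ≤ xᵀGx ≤ λmax‖x‖²
    (hquad : ∀ x : Fin K → ℝ,
      lmin * ∑ k, (x k)^2 ≤ x ⬝ᵥ G.mulVec x ∧ x ⬝ᵥ G.mulVec x ≤ lmax * ∑ k, (x k)^2)
    -- projection coefficients α and projection v^K
    (α : Fin K → ℝ) (hα : ∀ k, α k = ∫ z, ψ k z * v z ∂μ)
    (vK : (Fin n → ℝ) → ℝ)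
    (hvK : ∀ z, vK z = ∑ k, G⁻¹.mulVec α k * ψ k z)
    -- pseudo-regression coefficients and estimator
    (γ : Ω → Fin K → ℝ)
    (hγ : ∀ ω, γ ω = (M : ℝ)⁻¹ • G⁻¹.mulVec (fun k => ∑ m, ψ k (U m ω) * V m ω))
    (vtil : Ω → (Fin n → ℝ) → ℝ)
    (hvtil : ∀ ω z, vtil ω z = ∑ k, γ ω k * ψ k z) :
    ∫ ω, (∫ z, (vtil ω z - vK z)^2 ∂μ) ∂P
        ≤ lmin⁻¹ * ∑ k : Fin K,
            variance (fun ω => (M : ℝ)⁻¹ * ∑ m, ψ k (U m ω) * V m ω) P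
      ∧ lmin⁻¹ * ∑ k : Fin K,
            variance (fun ω => (M : ℝ)⁻¹ * ∑ m, ψ k (U m ω) * V m ω) P
        ≤ (σ^2 + A^2) * lmax * K / (lmin * M) := by
  have hU₀ : Measurable (U ⟨0, hM⟩) := hUmeas _
  have hX (k : Fin K) (m : Fin M) : IdentDistrib (fun ω => ψ k (U m ω) * V m ω)
      (fun ω => ψ k (U ⟨0, hM⟩ ω) * V ⟨0, hM⟩ ω) P P :=
    (hident m).comp (u := fun p : (Fin n → ℝ) × ℝ => ψ k p.1 * p.2) (by fun_prop)
  have hX₀ (k : Fin K) := memLp_comp_mul_and_integral_sq_le hU₀ (hVmeas _) (hψmeas k)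
    (hlaw ▸ hψL2 k) hVL2 hcond (hlaw ▸ hA) hσ
  have hβ (k : Fin K) : MemLp (fun ω => (M : ℝ)⁻¹ * ∑ m, ψ k (U m ω) * V m ω) 2 P :=
    (memLp_finsetSum _ fun m _ => (hX k m).symm.memLp_snd (hX₀ k).1).const_mul _
  have hmean (k : Fin K) : ∫ ω, (M : ℝ)⁻¹ * ∑ m, ψ k (U m ω) * V m ω ∂P = α k := by
    rw [integral_mean_eq_of_identDistrib ((hX₀ k).1.integrable one_le_two) (hX k),
      integral_comp_mul_eq_of_condExp_eq hU₀ hvmeas (hψmeas k)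
        (hVL2.integrable one_le_two) ((hX₀ k).1.integrable one_le_two) hcond, hlaw, hα]
  have hvar (k : Fin K) :
      Var[fun ω => (M : ℝ)⁻¹ * ∑ m, ψ k (U m ω) * V m ω; P] ≤ (σ ^ 2 + A ^ 2) * lmax / M := by
    have hind : iIndepFun (fun m ω => ψ k (U m ω) * V m ω) P :=
      hindep.comp (fun _ p => ψ k p.1 * p.2) fun _ => by fun_prop
    rw [variance_mean_eq_of_iIndepFun_identDistrib (hX₀ k).1 hind (hX k)]
    gcongr
    calc Var[fun ω => ψ k (U ⟨0, hM⟩ ω) * V ⟨0, hM⟩ ω; P]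
        ≤ ∫ ω, (ψ k (U ⟨0, hM⟩ ω) * V ⟨0, hM⟩ ω) ^ 2 ∂P :=
          variance_le_expectation_sq (hX₀ k).1.aestronglyMeasurable
      _ ≤ (σ ^ 2 + A ^ 2) * G k k := by
          simpa only [hlaw, hGdef, sq] using (hX₀ k).2
      _ ≤ (σ ^ 2 + A ^ 2) * lmax := by
          gcongr
          exact diag_le_of_dotProduct_mulVec_le (fun x => (hquad x).2) k
  have hdiff (ω : Ω) (z : Fin n → ℝ) : vtil ω z - vK z
      = ∑ k, (G⁻¹ *ᵥ fun k => (M : ℝ)⁻¹ * ∑ m, ψ k (U m ω) * V m ω - α k) k * ψ k z := by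
    have hcoef : γ ω - G⁻¹ *ᵥ α
        = G⁻¹ *ᵥ fun k => (M : ℝ)⁻¹ * ∑ m, ψ k (U m ω) * V m ω - α k := by
      rw [hγ, ← mulVec_smul, ← mulVec_sub]
      rfl
    simp only [hvtil, hvK, ← hcoef, ← Finset.sum_sub_distrib, Pi.sub_apply, sub_mul]
  refine ⟨?_, ?_⟩
  · simp_rw [hdiff]
    exact integral_integral_sq_sum_inv_mulVec_mul_le hψL2 hGdef hGinv hlmin
      (fun x => (hquad x).1) hβ hmean
  · calc _ ≤ lmin⁻¹ * ∑ _k : Fin K, (σ ^ 2 + A ^ 2) * lmax / M := by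
          gcongr with k
          exact hvar k
      _ = _ := by
          rw [Finset.sum_const, Finset.card_univ, Fintype.card_fin, nsmul_eq_mul]
          field_simp

/-- the estimation-error (variance) part of the
pseudo-regression error bound:
`E[∫ |ṽ − v^K|² dμ] ≤ (1/λmin)·Σ_k Var[((1/M)𝕄ᵀ𝕐)_k] ≤ (σ²+A²)·λmax·K/(λmin·M)`. -/
theorem pseudo_regression_variance_part_bound
    (n K M : ℕ) (hn : 0 < n) (hK : 0 < K) (hM : 0 < M)
    (μ : Measure (Fin n → ℝ)) [IsProbabilityMeasure μ]
    (ψ : Fin K → (Fin n → ℝ) → ℝ)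
    (hψmeas : ∀ k, Measurable (ψ k))
    (hψL2 : ∀ k, MemLp (ψ k) 2 μ)
    (G : Matrix (Fin K) (Fin K) ℝ)
    (hGdef : ∀ k l, G k l = ∫ z, ψ k z * ψ l z ∂μ)
    (hGinv : IsUnit G.det)
    (Ω : Type*) [MeasurableSpace Ω] (P : Measure Ω) [IsProbabilityMeasure P]
    (U : Fin M → Ω → (Fin n → ℝ)) (V : Fin M → Ω → ℝ)
    (hUmeas : ∀ m, Measurable (U m)) (hVmeas : ∀ m, Measurable (V m))
    (hindep : iIndepFun (fun m ω => (U m ω, V m ω)) P)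
    (hident : ∀ m, IdentDistrib (fun ω => (U m ω, V m ω))
      (fun ω => (U ⟨0, hM⟩ ω, V ⟨0, hM⟩ ω)) P P)
    (hlaw : Measure.map (U ⟨0, hM⟩) P = μ)
    (hVL2 : MemLp (V ⟨0, hM⟩) 2 P)
    (v : (Fin n → ℝ) → ℝ) (hvmeas : Measurable v)
    (hcond : P[(fun ω => V ⟨0, hM⟩ ω) |
        MeasurableSpace.comap (U ⟨0, hM⟩) inferInstance]
      =ᵐ[P] fun ω => v (U ⟨0, hM⟩ ω))
    (A σ lmin lmax : ℝ)
    -- |v| ≤ A μ-a.e.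
    (hA : ∀ᵐ z ∂μ, |v z| ≤ A)
    -- conditional variance bound E[(V⁽¹⁾ - v(U⁽¹⁾))² | U⁽¹⁾] ≤ σ² a.s.
    (hσ : ∀ᵐ ω ∂P, (P[(fun ω' => (V ⟨0, hM⟩ ω' - v (U ⟨0, hM⟩ ω'))^2) |
        MeasurableSpace.comap (U ⟨0, hM⟩) inferInstance]) ω ≤ σ^2)
    (hlmin : 0 < lmin) (hminmax : lmin ≤ lmax)
    -- eigenvalue bounds for the Gram matrix: λmin‖x‖² ≤ xᵀGx ≤ λmax‖x‖²
    (hquad : ∀ x : Fin K → ℝ,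
      lmin * ∑ k, (x k)^2 ≤ x ⬝ᵥ G.mulVec x ∧ x ⬝ᵥ G.mulVec x ≤ lmax * ∑ k, (x k)^2)
    -- projection coefficients α and projection v^K
    (α : Fin K → ℝ) (hα : ∀ k, α k = ∫ z, ψ k z * v z ∂μ)
    (vK : (Fin n → ℝ) → ℝ)
    (hvK : ∀ z, vK z = ∑ k, G⁻¹.mulVec α k * ψ k z)
    -- pseudo-regression coefficients and estimator
    (γ : Ω → Fin K → ℝ)
    (hγ : ∀ ω, γ ω = (M : ℝ)⁻¹ • G⁻¹.mulVec (fun k => ∑ m, ψ k (U m ω) * V m ω))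
    (vtil : Ω → (Fin n → ℝ) → ℝ)
    (hvtil : ∀ ω z, vtil ω z = ∑ k, γ ω k * ψ k z) :
    ∫ ω, (∫ z, (vtil ω z - vK z)^2 ∂μ) ∂P
        ≤ lmin⁻¹ * ∑ k : Fin K,
            variance (fun ω => (M : ℝ)⁻¹ * ∑ m, ψ k (U m ω) * V m ω) P
      ∧ lmin⁻¹ * ∑ k : Fin K,
            variance (fun ω => (M : ℝ)⁻¹ * ∑ m, ψ k (U m ω) * V m ω) P
        ≤ (σ^2 + A^2) * lmax * K / (lmin * M) :=
  pseudo_regression_variance_part_bound_general n K M hM μ ψ hψmeas hψL2 G hGdef hGinv Ω P U V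
    hUmeas hVmeas hindep hident hlaw hVL2 v hvmeas hcond A σ lmin lmax hA hσ hlmin hquad α hα vK hvK
    γ hγ vtil hvtil
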